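/- Define f : ℂ³ → ℂ by f(u, v, w) = 64u³ − 12u·(3 + 2(v² − w²)) − 14(v² + w²) − (v⁴ − w⁴), and for j = 1, 2, 3 and h ∈ ℝ set Z_j(h) = cos((2h + 2π(j−1))/3) + (i/2)·sin(2·(2h + 2π(j−1))/3). Then {(u, v) ∈ ℂ² : |v| = 1 and f(u, v, conj(v)) = 0} = {(Z_j(h), e^{ih}) : j ∈ {1, 2, 3}, h ∈ ℝ}; i.e. the zero set of the figure-8 semiholomorphic polynomial on ℂ × S¹ is exactly the parametrized braid whose closure is the figure-8 knot. -/

import Mathlib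

open Complex Real

/-- The paper's figure-8 semiholomorphic polynomial
`f(u,v,w) = 64u³ − 12u(3 + 2(v² − w²)) − 14(v² + w²) − (v⁴ − w⁴)`. -/
def fFig8 (u v w : ℂ) : ℂ :=
  64 * u ^ 3 - 12 * u * (3 + 2 * (v ^ 2 - w ^ 2)) - 14 * (v ^ 2 + w ^ 2) - (v ^ 4 - w ^ 4)

/-- The figure-8 braid strand parametrization (`s = 3`, `ℓ = 2`, `r = 2`, `a = b = 1`):
`Z_j(h) = cos((2h + 2π(j−1))/3) + (i/2)·sin(2·(2h + 2π(j−1))/3)`. -/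
noncomputable def Zfig8 (j : ℕ) (h : ℝ) : ℂ :=
  ((Real.cos ((2 * h + 2 * Real.pi * ((j : ℝ) - 1)) / 3) : ℝ) : ℂ) +
    Complex.I / 2 * ((Real.sin (2 * (2 * h + 2 * Real.pi * ((j : ℝ) - 1)) / 3) : ℝ) : ℂ)

/-!
Put `ζ = e^{2ih/3}`, `ω = e^{2πi/3}` and `g(ζ) = (ζ + ζ⁻¹)/2 + (ζ² − ζ⁻²)/4`, so that
`g(e^{iθ}) = cos θ + (i/2) sin 2θ` and `Z_j(h) = g(ζ ω^{j-1})`. Since `e^{±2ih} = ζ^{±3}`,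
`f(u, e^{ih}, e^{-ih}) = 64 ∏_j (u − Z_j(h))`: this is a polynomial identity in `u`, `ζ`, `ζ⁻¹`, `ω`
modulo `ζ ζ⁻¹ = 1` and `ω² + ω + 1 = 0`. On the unit circle `conj v = v⁻¹`, so the zero set is the
union of the three strands.
-/

noncomputable def braidPoint (ζ : ℂ) : ℂ := (ζ + ζ⁻¹) / 2 + (ζ ^ 2 - ζ⁻¹ ^ 2) / 4

theorem fFig8_eq_prod_braidPoint {ζ ω : ℂ} (hζ : ζ ≠ 0) (hω : IsPrimitiveRoot ω 3)
    (u : ℂ) {v w : ℂ} (hv : v ^ 2 = ζ ^ 3) (hw : w ^ 2 = ζ⁻¹ ^ 3) :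
    fFig8 u v w = 64 * ∏ k ∈ Finset.range 3, (u - braidPoint (ζ * ω ^ k)) := by
  have hω3 : ω ^ 3 = 1 := hω.pow_eq_one
  have hωsum : ω ^ 2 + ω + 1 = 0 := by
    have := hω.geom_sum_eq_zero (by norm_num)
    simp only [Finset.sum_range_succ, Finset.sum_range_zero] at this
    linear_combination this
  have hωinv : ω⁻¹ = ω ^ 2 := inv_eq_of_mul_eq_one_right (by linear_combination hω3)
  have hωinv' : (ω ^ 2)⁻¹ = ω := by rw [← hωinv, inv_inv]
  have hζinv : ζ * ζ⁻¹ = 1 := mul_inv_cancel₀ hζ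
  simp only [fFig8, braidPoint, Finset.prod_range_succ, Finset.prod_range_zero, pow_zero, pow_one,
    mul_one, one_mul, mul_inv, hωinv, hωinv']
  rw [show v ^ 4 = (v ^ 2) ^ 2 by ring, show w ^ 4 = (w ^ 2) ^ 2 by ring, hv, hw]
  generalize ζ⁻¹ = y at hζinv ⊢
  grind

theorem braidPoint_exp (θ : ℝ) :
    braidPoint (cexp (θ * I)) = Real.cos θ + I / 2 * Real.sin (2 * θ) := by
  rw [braidPoint, ofReal_cos, ofReal_sin, Complex.cos, Complex.sin, ← Complex.exp_neg,
    ← Complex.exp_nat_mul, ← Complex.exp_nat_mul]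
  push_cast
  ring_nf
  rw [I_sq]
  ring

theorem Zfig8_eq_braidPoint (j : ℕ) (h : ℝ) :
    Zfig8 j h = braidPoint (cexp (↑((2 * h + 2 * π * ((j : ℝ) - 1)) / 3) * I)) := by
  rw [braidPoint_exp, Zfig8, mul_div_assoc]

theorem fFig8_exp_I_mul (u : ℂ) (h : ℝ) :
    fFig8 u (cexp (I * h)) (starRingEnd ℂ (cexp (I * h))) =
      64 * ∏ k ∈ Finset.range 3, (u - Zfig8 (k + 1) h) := by
  have hω : IsPrimitiveRoot (cexp (2 * π * I / 3)) 3 := isPrimitiveRoot_exp 3 (by norm_num)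
  have hv : cexp (I * h) ^ 2 = cexp (↑(2 * h / 3) * I) ^ 3 := by
    rw [← Complex.exp_nat_mul, ← Complex.exp_nat_mul]; push_cast; ring_nf
  have hw : starRingEnd ℂ (cexp (I * h)) ^ 2 = (cexp (↑(2 * h / 3) * I))⁻¹ ^ 3 := by
    rw [← Complex.exp_conj, ← Complex.exp_neg, ← Complex.exp_nat_mul, ← Complex.exp_nat_mul,
      map_mul, conj_I, conj_ofReal]
    push_cast; ring_nf
  rw [fFig8_eq_prod_braidPoint (Complex.exp_ne_zero _) hω u hv hw]
  congr 1
  refine Finset.prod_congr rfl fun k _ => ?_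
  rw [Zfig8_eq_braidPoint, ← Complex.exp_nat_mul, ← Complex.exp_add]
  push_cast
  ring_nf

theorem fFig8_exp_I_mul_eq_zero_iff (u : ℂ) (h : ℝ) :
    fFig8 u (cexp (I * h)) (starRingEnd ℂ (cexp (I * h))) = 0 ↔
      ∃ j ∈ Finset.Icc (1 : ℕ) 3, u = Zfig8 j h := by
  simp only [fFig8_exp_I_mul, mul_eq_zero, OfNat.ofNat_ne_zero, false_or, Finset.prod_eq_zero_iff,
    Finset.mem_range, Finset.mem_Icc, sub_eq_zero]
  constructor
  · rintro ⟨k, hk, hu⟩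
    exact ⟨k + 1, by omega, hu⟩
  · rintro ⟨j, hj, hu⟩
    exact ⟨j - 1, by omega, by rwa [Nat.sub_add_cancel hj.1]⟩

/-- The zero set of the figure-8 semiholomorphic polynomial on `ℂ × S¹` is exactly the
parametrized braid whose closure is the figure-8 knot. -/
theorem figure_eight_zero_set :
    {z : ℂ × ℂ | ‖z.2‖ = 1 ∧ fFig8 z.1 z.2 (starRingEnd ℂ z.2) = 0} =
      {z : ℂ × ℂ | ∃ j ∈ Finset.Icc (1 : ℕ) 3, ∃ h : ℝ,
        z = (Zfig8 j h, Complex.exp (Complex.I * h))} := by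
  ext ⟨u, v⟩
  simp only [Set.mem_ofPred_eq, Prod.mk.injEq]
  constructor
  · rintro ⟨hv, hf⟩
    obtain ⟨h, rfl⟩ := (norm_eq_one_iff v).mp hv
    rw [mul_comm] at hf
    obtain ⟨j, hj, hu⟩ := (fFig8_exp_I_mul_eq_zero_iff u h).mp hf
    exact ⟨j, hj, h, hu, by rw [mul_comm]⟩
  · rintro ⟨j, hj, h, hu, rfl⟩
    exact ⟨norm_exp_I_mul_ofReal h, (fFig8_exp_I_mul_eq_zero_iff u h).mpr ⟨j, hj, hu⟩⟩
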